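/- arXiv:1704.06733 — 6 statements merged into one kernel-verified Lean document; each statement's English description precedes it below -/
import Mathlib

section
/- Let 0 < α < 1. Then for every integer k ≥ 2 one has ω_k^{(α)} < ω_{k+1}^{(α)} and ω_k^{(α)} < 0; that is, the sequence satisfies ω_2^{(α)} < ω_3^{(α)} < ω_4^{(α)} < ⋯ < 0. -/
open Finset

/-- The coefficients `g_k^{(γ)}`: `g_0 = 1`, `g_k = (1 - (γ+1)/k) g_{k-1}` for `k ≥ 1`. -/
noncomputable def gcoef (γ : ℝ) : ℕ → ℝ
  | 0 => 1
  | k + 1 => (1 - (γ + 1) / (k + 1)) * gcoef γ k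

/-- The coefficients `ω_k^{(γ)}`: `ω_0 = (γ/2) g_0` and
`ω_k = (γ/2) g_k + ((2-γ)/2) g_{k-1}` for `k ≥ 1`. -/
noncomputable def wcoef (γ : ℝ) : ℕ → ℝ
  | 0 => γ / 2 * gcoef γ 0
  | k + 1 => γ / 2 * gcoef γ (k + 1) + (2 - γ) / 2 * gcoef γ k

lemma gcoef_neg (α : ℝ) (hα0 : 0 < α) (hα1 : α < 1) :
    ∀ k : ℕ, 1 ≤ k → gcoef α k < 0 := by
  intro k hk
  induction k with
  | zero => omega
  | succ n ih =>
    cases n with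
    | zero =>
      simp [gcoef]
      linarith
    | succ m =>
      have hg := ih (by omega)
      have hfac : (0:ℝ) < 1 - (α + 1) / (m + 1 + 1) := by
        rw [sub_pos, div_lt_one (by positivity)]
        linarith [Nat.cast_nonneg (α := ℝ) m]
      have : gcoef α (m + 1 + 1) = (1 - (α + 1) / (m + 1 + 1)) * gcoef α (m + 1) := by
        simp [gcoef]
      rw [this]
      exact mul_neg_of_pos_of_neg hfac hg

theorem stmt1 (α : ℝ) (hα0 : 0 < α) (hα1 : α < 1) :
    ∀ k : ℕ, 2 ≤ k → wcoef α k < wcoef α (k + 1) ∧ wcoef α k < 0 := by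
  intro k hk
  obtain ⟨m, rfl⟩ : ∃ m, k = m + 2 := ⟨k - 2, by omega⟩
  have h1 : gcoef α (m + 1) < 0 := gcoef_neg α hα0 hα1 _ (by omega)
  have h2 : gcoef α (m + 2) < 0 := gcoef_neg α hα0 hα1 _ (by omega)
  have e2 : gcoef α (m + 2) = (1 - (α + 1) / (m + 1 + 1)) * gcoef α (m + 1) := by
    simp [gcoef]
  have e3 : gcoef α (m + 3) = (1 - (α + 1) / (m + 2 + 1)) * gcoef α (m + 2) := by
    show gcoef α (m + 2 + 1) = _
    simp [gcoef]
  have hw2 : wcoef α (m + 2) = α / 2 * gcoef α (m + 2) + (2 - α) / 2 * gcoef α (m + 1) := by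
    show wcoef α (m + 1 + 1) = _
    simp [wcoef]
  have hw3 : wcoef α (m + 3) = α / 2 * gcoef α (m + 3) + (2 - α) / 2 * gcoef α (m + 2) := by
    show wcoef α (m + 2 + 1) = _
    simp [wcoef]
  have hm1 : (0:ℝ) < (m:ℝ) + 1 + 1 := by positivity
  have hm2 : (0:ℝ) < (m:ℝ) + 2 + 1 := by positivity
  have hd2 : (0:ℝ) < (α + 1) / ((m:ℝ) + 1 + 1) := by positivity
  have hd3 : (0:ℝ) < (α + 1) / ((m:ℝ) + 2 + 1) := by positivity
  constructor
  · have q3 : 0 < gcoef α (m + 3) - gcoef α (m + 2) := by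
      rw [e3]; nlinarith [mul_pos hd3 (neg_pos.mpr h2)]
    have q2 : 0 < gcoef α (m + 2) - gcoef α (m + 1) := by
      rw [e2]; nlinarith [mul_pos hd2 (neg_pos.mpr h1)]
    have p3 : 0 < α / 2 * (gcoef α (m + 3) - gcoef α (m + 2)) :=
      mul_pos (by linarith) q3
    have p2 : 0 < (2 - α) / 2 * (gcoef α (m + 2) - gcoef α (m + 1)) :=
      mul_pos (by linarith) q2
    rw [hw2, hw3]
    nlinarith [p3, p2]
  · rw [hw2]
    have : α / 2 * gcoef α (m + 2) < 0 := mul_neg_of_pos_of_neg (by linarith) h2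
    have : (2 - α) / 2 * gcoef α (m + 1) < 0 := mul_neg_of_pos_of_neg (by linarith) h1
    linarith
end

section
/- Let 0 < α < 1. Then the series Σ_{k=0}^{∞} ω_k^{(α)} converges and its sum equals 0. -/
/-!
Writing `g^{(γ)}_k = (-1)^k binom(γ, k)`, the partial sums of `g^{(γ)}` are `g^{(γ-1)}`
(Pascal's rule), so `∑_{k ≤ n} ω^{(α)}_k = g^{(α-1)}_n - (1 - α/2) g^{(α)}_n`. It remains to see
that `g^{(γ)}_n → 0` for `γ > -1`. For `-1 < γ ≤ 0` every factor `1 - (γ+1)/k` lies in `[0, 1)`,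
and `1 - x ≤ exp (-x)` bounds the product by `exp (-(γ+1) H_n)` with `H_n` the divergent harmonic
sums. Larger `γ` reduce to `γ - 1` through `g^{(γ)}_{n+1} = -γ/(n+1) · g^{(γ-1)}_n`.
-/

open Finset

open Filter Topology

lemma gcoef_succ (γ : ℝ) (n : ℕ) :
    gcoef γ (n + 1) = (1 - (γ + 1) / (n + 1)) * gcoef γ n := rfl

lemma gcoef_succ_eq_neg_div_mul_gcoef_sub_one (γ : ℝ) (n : ℕ) :
    gcoef γ (n + 1) = -γ / (n + 1) * gcoef (γ - 1) n := by
  induction n with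
  | zero => simp [gcoef]
  | succ n ih =>
    rw [gcoef_succ, ih, gcoef_succ]
    push_cast
    field_simp
    ring

lemma gcoef_sub_one_succ (γ : ℝ) (n : ℕ) :
    gcoef (γ - 1) (n + 1) = gcoef (γ - 1) n + gcoef γ (n + 1) := by
  rw [gcoef_succ, gcoef_succ_eq_neg_div_mul_gcoef_sub_one]
  field_simp
  ring

lemma sum_range_succ_wcoef (γ : ℝ) (n : ℕ) :
    ∑ k ∈ range (n + 1), wcoef γ k = gcoef (γ - 1) n - (1 - γ / 2) * gcoef γ n := by
  induction n with
  | zero => simp [wcoef, gcoef]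
  | succ n ih =>
    rw [sum_range_succ, ih, gcoef_sub_one_succ, wcoef]
    ring

section Nonpos

variable {γ : ℝ} (hγ : γ ≤ 0)
include hγ

lemma gcoef_factor_nonneg (n : ℕ) : 0 ≤ 1 - (γ + 1) / (n + 1) := by
  rw [sub_nonneg, div_le_one (by positivity)]
  linarith [n.cast_nonneg (α := ℝ)]

lemma gcoef_nonneg (n : ℕ) : 0 ≤ gcoef γ n := by
  induction n with
  | zero => simp [gcoef]
  | succ n ih => exact gcoef_succ γ n ▸ mul_nonneg (gcoef_factor_nonneg hγ n) ih

lemma gcoef_le_exp_neg_mul_sum (n : ℕ) :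
    gcoef γ n ≤ Real.exp (-(γ + 1) * ∑ j ∈ range n, 1 / ((j : ℝ) + 1)) := by
  induction n with
  | zero => simp [gcoef]
  | succ n ih =>
    calc gcoef γ (n + 1) = (1 - (γ + 1) / (n + 1)) * gcoef γ n := gcoef_succ γ n
      _ ≤ Real.exp (-((γ + 1) / (n + 1))) *
            Real.exp (-(γ + 1) * ∑ j ∈ range n, 1 / ((j : ℝ) + 1)) := by
          gcongr
          · exact gcoef_nonneg hγ n
          · linarith [Real.add_one_le_exp (-((γ + 1) / (n + 1)))]
      _ = Real.exp (-(γ + 1) * ∑ j ∈ range (n + 1), 1 / ((j : ℝ) + 1)) := by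
          rw [← Real.exp_add, sum_range_succ]
          ring_nf

lemma tendsto_gcoef_of_nonpos (hγ₁ : -1 < γ) : Tendsto (gcoef γ) atTop (𝓝 0) := by
  have hexp : Tendsto (fun n : ℕ => -(γ + 1) * ∑ j ∈ range n, 1 / ((j : ℝ) + 1))
      atTop atBot :=
    Real.tendsto_sum_range_one_div_nat_succ_atTop.const_mul_atTop_of_neg (by linarith)
  exact squeeze_zero (gcoef_nonneg hγ) (gcoef_le_exp_neg_mul_sum hγ)
    (Real.tendsto_exp_atBot.comp hexp)

end Nonpos

lemma tendsto_gcoef {γ : ℝ} (hγ : -1 < γ) : Tendsto (gcoef γ) atTop (𝓝 0) := by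
  suffices ∀ m : ℕ, ∀ γ : ℝ, -1 < γ → γ ≤ m → Tendsto (gcoef γ) atTop (𝓝 0) from
    this ⌈γ⌉₊ γ hγ (Nat.le_ceil γ)
  intro m
  induction m with
  | zero => exact fun γ hγ hγm => tendsto_gcoef_of_nonpos (by simpa using hγm) hγ
  | succ m ih =>
    intro γ hγ hγm
    rcases le_or_gt γ 0 with hγ0 | hγ0
    · exact tendsto_gcoef_of_nonpos hγ0 hγ
    have hprev := ih (γ - 1) (by linarith) (by push_cast at hγm; linarith)
    have hcoef : Tendsto (fun n : ℕ => -γ / ((n : ℝ) + 1)) atTop (𝓝 0) := by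
      simpa using (tendsto_add_atTop_iff_nat 1).2 (tendsto_const_div_atTop_nhds_zero_nat (-γ))
    rw [← tendsto_add_atTop_iff_nat 1]
    simpa [gcoef_succ_eq_neg_div_mul_gcoef_sub_one] using hcoef.mul hprev

theorem stmt3_general (α : ℝ) (hα0 : 0 < α) :
    Filter.Tendsto (fun n : ℕ => ∑ k ∈ Finset.range n, wcoef α k)
      Filter.atTop (nhds 0) := by
  rw [← tendsto_add_atTop_iff_nat 1]
  have hlim := (tendsto_gcoef (γ := α - 1) (by linarith)).sub
    ((tendsto_gcoef (γ := α) (by linarith)).const_mul (1 - α / 2))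
  simpa [sum_range_succ_wcoef] using hlim

theorem stmt3 (α : ℝ) (hα0 : 0 < α) (hα1 : α < 1) :
    Filter.Tendsto (fun n : ℕ => ∑ k ∈ Finset.range n, wcoef α k)
      Filter.atTop (nhds 0) :=
  stmt3_general α hα0
end

section
/- Let 1 < β < 2. Then ω_0^{(β)} ≤ 1, ω_3^{(β)} ≤ ω_0^{(β)}, ω_{k+1}^{(β)} ≤ ω_k^{(β)} for every integer k ≥ 3, and ω_k^{(β)} ≥ 0 for every integer k ≥ 3; that is, 1 ≥ ω_0^{(β)} ≥ ω_3^{(β)} ≥ ω_4^{(β)} ≥ ⋯ ≥ 0. -/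
open Finset

lemma gstep0 (β : ℝ) (n : ℕ) :
    gcoef β (n + 1) = (1 - (β + 1) / ((n : ℝ) + 1)) * gcoef β n := rfl

lemma gstep (β : ℝ) (n : ℕ) :
    gcoef β (n + 3) = (1 - (β + 1) / ((n : ℝ) + 3)) * gcoef β (n + 2) := by
  rw [show n + 3 = (n + 2) + 1 from rfl, gstep0]
  push_cast
  ring_nf

lemma gpos (β : ℝ) (hβ1 : 1 < β) (hβ2 : β < 2) : ∀ n : ℕ, 0 ≤ gcoef β (n + 2) := by
  intro n
  induction n with
  | zero =>
    show (0:ℝ) ≤ gcoef β 2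
    simp only [gcoef]
    nlinarith
  | succ m ih =>
    rw [show m + 1 + 2 = m + 3 from rfl, gstep]
    apply mul_nonneg _ ih
    have h3 : (0:ℝ) < (m:ℝ) + 3 := by positivity
    rw [sub_nonneg, div_le_one h3]
    linarith

lemma gdec (β : ℝ) (hβ1 : 1 < β) (hβ2 : β < 2) :
    ∀ n : ℕ, gcoef β (n + 3) ≤ gcoef β (n + 2) := by
  intro n
  have hpos := gpos β hβ1 hβ2 n
  rw [gstep]
  have h3 : (0:ℝ) < (n:ℝ) + 3 := by positivity
  have hle : (1 - (β + 1) / ((n:ℝ) + 3)) ≤ 1 := by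
    have : 0 ≤ (β + 1) / ((n:ℝ) + 3) := by positivity
    linarith
  nlinarith

theorem stmt6 (β : ℝ) (hβ1 : 1 < β) (hβ2 : β < 2) :
    wcoef β 0 ≤ 1 ∧ wcoef β 3 ≤ wcoef β 0 ∧
    (∀ k : ℕ, 3 ≤ k → wcoef β (k + 1) ≤ wcoef β k) ∧
    (∀ k : ℕ, 3 ≤ k → 0 ≤ wcoef β k) := by
  refine ⟨?_, ?_, ?_, ?_⟩
  · show β / 2 * gcoef β 0 ≤ 1
    simp only [gcoef]
    linarith
  · show β / 2 * gcoef β 3 + (2 - β) / 2 * gcoef β 2 ≤ β / 2 * gcoef β 0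
    simp only [gcoef]
    push_cast
    nlinarith [sq_nonneg (β - 1), sq_nonneg (2 - β), sq_nonneg ((β-1)*(2-β))]
  · intro k hk
    obtain ⟨m, rfl⟩ := Nat.exists_eq_add_of_le hk
    rw [show 3 + m = m + 3 from by omega]
    show β / 2 * gcoef β (m + 3 + 1) + (2 - β) / 2 * gcoef β (m + 3) ≤
      β / 2 * gcoef β (m + 3) + (2 - β) / 2 * gcoef β (m + 2)
    have h1 := gdec β hβ1 hβ2 (m + 1)
    have h2 := gdec β hβ1 hβ2 m
    rw [show m + 1 + 3 = m + 3 + 1 from rfl, show m + 1 + 2 = m + 3 from rfl] at h1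
    nlinarith
  · intro k hk
    obtain ⟨m, rfl⟩ := Nat.exists_eq_add_of_le hk
    rw [show 3 + m = m + 3 from by omega]
    show 0 ≤ β / 2 * gcoef β (m + 3) + (2 - β) / 2 * gcoef β (m + 2)
    have h1 := gpos β hβ1 hβ2 (m + 1)
    have h2 := gpos β hβ1 hβ2 m
    rw [show m + 1 + 2 = m + 3 from rfl] at h1
    nlinarith
end

section
/- Let 1 < β < 2. Then the series Σ_{k=0}^{∞} ω_k^{(β)} converges and its sum equals 0. -/
/-!
The `g_k^{(γ)}` are the Taylor coefficients of `(1 - z)^{γ+1}`, and their partial sums telescope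
into the product `S_n = ∏_{j=1}^{n} (1 - γ/j)`, which is `O(1/n)` when `1 ≤ γ ≤ 2`. Since
`ω_k = g_k - ((2-γ)/2)(g_k - g_{k-1})`, the partial sums of the `ω_k` are `S_n - ((2-γ)/2) g_n`,
and both terms tend to `0`.
-/

open Finset

open Filter Topology

lemma gcoef_succ_eq_mul_sum (γ : ℝ) (n : ℕ) :
    gcoef γ (n + 1) = -(γ / (n + 1)) * ∑ k ∈ range (n + 1), gcoef γ k := by
  induction n with
  | zero => simp [gcoef]
  | succ n ih =>
    rw [sum_range_succ, show gcoef γ (n + 1 + 1) =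
      (1 - (γ + 1) / ((n + 1 : ℕ) + 1)) * gcoef γ (n + 1) from rfl, ih]
    push_cast
    field_simp
    ring

lemma sum_range_gcoef_succ (γ : ℝ) (n : ℕ) :
    ∑ k ∈ range (n + 2), gcoef γ k = (1 - γ / (n + 1)) * ∑ k ∈ range (n + 1), gcoef γ k := by
  rw [sum_range_succ _ (n + 1), gcoef_succ_eq_mul_sum]
  ring

lemma sum_range_wcoef (γ : ℝ) (n : ℕ) :
    ∑ k ∈ range (n + 1), wcoef γ k = ∑ k ∈ range (n + 1), gcoef γ k - (2 - γ) / 2 * gcoef γ n := by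
  induction n with
  | zero => simp only [zero_add, range_one, sum_singleton, wcoef, gcoef]; ring
  | succ n ih =>
    rw [sum_range_succ, ih, sum_range_succ _ (n + 1)]
    simp only [wcoef]
    ring

lemma abs_sum_range_gcoef_le {γ : ℝ} (hγ1 : 1 ≤ γ) (hγ2 : γ ≤ 2) {n : ℕ} (hn : 1 ≤ n) :
    |∑ k ∈ range (n + 1), gcoef γ k| ≤ (γ - 1) / n := by
  induction n, hn using Nat.le_induction with
  | base =>
    have h_sum : ∑ k ∈ range (1 + 1), gcoef γ k = 1 - γ := by
      simp only [sum_range_succ, range_one, sum_singleton, gcoef]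
      ring
    rw [h_sum, abs_of_nonpos (by linarith)]
    norm_num
  | succ n hn ih =>
    have hn1 : (1 : ℝ) ≤ n := by exact_mod_cast hn
    have hfactor_nonneg : 0 ≤ 1 - γ / (n + 1) := by
      rw [sub_nonneg, div_le_one (by positivity)]
      linarith
    have hfactor_le : 1 - γ / (n + 1) ≤ n / (n + 1) := by
      have hγ_div : 1 / ((n : ℝ) + 1) ≤ γ / (n + 1) := by gcongr
      have hn_div : (n : ℝ) / (n + 1) = 1 - 1 / (n + 1) := by field_simp; ring
      linarith
    rw [sum_range_gcoef_succ, abs_mul, abs_of_nonneg hfactor_nonneg]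
    calc (1 - γ / (n + 1)) * |∑ k ∈ range (n + 1), gcoef γ k|
        ≤ n / (n + 1) * ((γ - 1) / n) :=
          mul_le_mul hfactor_le ih (abs_nonneg _) (by positivity)
      _ = (γ - 1) / ((n + 1 : ℕ) : ℝ) := by
          push_cast
          field_simp

lemma tendsto_sum_range_gcoef {γ : ℝ} (hγ1 : 1 ≤ γ) (hγ2 : γ ≤ 2) :
    Tendsto (fun n ↦ ∑ k ∈ range n, gcoef γ k) atTop (𝓝 0) := by
  rw [← tendsto_add_atTop_iff_nat 1]
  refine squeeze_zero_norm' ?_ (tendsto_const_div_atTop_nhds_zero_nat (γ - 1))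
  filter_upwards [eventually_ge_atTop 1] with n hn
  exact abs_sum_range_gcoef_le hγ1 hγ2 hn

lemma tendsto_sum_range_wcoef_of_tendsto_sum_range_gcoef {γ S : ℝ}
    (h : Tendsto (fun n ↦ ∑ k ∈ range n, gcoef γ k) atTop (𝓝 S)) :
    Tendsto (fun n ↦ ∑ k ∈ range n, wcoef γ k) atTop (𝓝 S) := by
  have hg : Tendsto (gcoef γ) atTop (𝓝 0) := by
    simpa [sum_range_succ] using ((tendsto_add_atTop_iff_nat 1).mpr h).sub h
  rw [← tendsto_add_atTop_iff_nat 1]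
  simp only [sum_range_wcoef]
  simpa using ((tendsto_add_atTop_iff_nat 1).mpr h).sub (hg.const_mul ((2 - γ) / 2))

theorem stmt8 (β : ℝ) (hβ1 : 1 < β) (hβ2 : β < 2) :
    Filter.Tendsto (fun n : ℕ => ∑ k ∈ Finset.range n, wcoef β k)
      Filter.atTop (nhds 0) :=
  tendsto_sum_range_wcoef_of_tendsto_sum_range_gcoef (tendsto_sum_range_gcoef hβ1.le hβ2.le)
end

section
/- Let 0 < α < 1. Then for every integer N ≥ 2, Σ_{k=N}^{2N+2} ω_k^{(α)} < Σ_{k=N}^{2N} g_k^{(α)}. -/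
/-!
Since `ω_k = (α/2) g_k + (1 - α/2) g_{k-1}` for `k ≥ 1` and the two weights add up to `1`,
the sum of `ω_k` over `N ≤ k ≤ 2N+2` equals the sum of `g_k` over `N ≤ k ≤ 2N` plus the boundary
terms `(1 - α/2) g_{N-1} + g_{2N+1} + (α/2) g_{2N+2}`. For `0 < α < 1` every `g_k` with `k ≥ 1`
is negative (`g_1 = -α` and the factors `1 - (α+1)/k` are positive for `k ≥ 2`), so the boundary
terms are negative.
-/

open Finset

lemma gcoef_succ_neg {γ : ℝ} (hγ0 : 0 < γ) (hγ1 : γ < 1) (k : ℕ) : gcoef γ (k + 1) < 0 := by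
  induction k with
  | zero => norm_num [gcoef]; exact hγ0
  | succ k ih =>
    have hfactor : 0 < 1 - (γ + 1) / ((k + 1 : ℕ) + 1 : ℝ) := by
      rw [sub_pos, div_lt_one (by positivity)]
      push_cast
      linarith [k.cast_nonneg (α := ℝ)]
    exact mul_neg_of_pos_of_neg hfactor ih

lemma sum_Icc_wcoef_add_one (γ : ℝ) (a b : ℕ) :
    ∑ k ∈ Icc (a + 1) (b + 1), wcoef γ k =
      γ / 2 * ∑ k ∈ Icc (a + 1) (b + 1), gcoef γ k + (2 - γ) / 2 * ∑ k ∈ Icc a b, gcoef γ k := by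
  have shift : ∀ f : ℕ → ℝ, ∑ k ∈ Icc (a + 1) (b + 1), f k = ∑ k ∈ Icc a b, f (k + 1) := by
    intro f
    rw [← map_add_right_Icc, sum_map]
    rfl
  rw [shift, shift, mul_sum, mul_sum, ← sum_add_distrib]
  rfl

lemma sum_Icc_wcoef_eq (γ : ℝ) (n : ℕ) :
    ∑ k ∈ Icc (n + 1) (2 * (n + 1) + 2), wcoef γ k =
      ∑ k ∈ Icc (n + 1) (2 * (n + 1)), gcoef γ k +
        ((2 - γ) / 2 * gcoef γ n + gcoef γ (2 * (n + 1) + 1) + γ / 2 * gcoef γ (2 * (n + 1) + 2)) := by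
  have hlow : ∑ k ∈ Icc n (2 * (n + 1) + 1), gcoef γ k =
      gcoef γ n + ∑ k ∈ Icc (n + 1) (2 * (n + 1) + 1), gcoef γ k := by
    rw [← insert_Icc_add_one_left_eq_Icc (by omega), sum_insert (by simp)]
  rw [sum_Icc_wcoef_add_one, hlow, sum_Icc_succ_top (by omega), sum_Icc_succ_top (by omega)]
  ring

theorem stmt11 (α : ℝ) (hα0 : 0 < α) (hα1 : α < 1) :
    ∀ N : ℕ, 2 ≤ N →
      ∑ k ∈ Finset.Icc N (2 * N + 2), wcoef α k <
        ∑ k ∈ Finset.Icc N (2 * N), gcoef α k := by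
  intro N hN
  obtain ⟨n, rfl⟩ : ∃ n, N = n + 1 + 1 := ⟨N - 2, by omega⟩
  rw [sum_Icc_wcoef_eq]
  have hfirst : (2 - α) / 2 * gcoef α (n + 1) < 0 :=
    mul_neg_of_pos_of_neg (by linarith) (gcoef_succ_neg hα0 hα1 n)
  have hmiddle := gcoef_succ_neg hα0 hα1 (2 * (n + 1 + 1))
  have hlast : α / 2 * gcoef α (2 * (n + 1 + 1) + 2) < 0 :=
    mul_neg_of_pos_of_neg (by linarith) (gcoef_succ_neg hα0 hα1 _)
  linarith
end

section
/- Let 1 < β < 2, let N ≥ 2 be an integer and h > 0. Then for every grid function v, one has (δ^β_{x,+} v, v) = (δ^β_{x,-} v, v) and (δ^β_{x,+} v, v) ≤ (h^{-β} Σ_{k=0}^{N-1} ω_k^{(β)}) · ‖v‖². -/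
/-!
In matrix form `h^β δ₊` is the Toeplitz matrix with entries `ω_{i-j+1}` and `h^β δ₋` is its
transpose, so both inner products equal `h^{1-β} ∑ₖ ωₖ Cₖ`, where `Cₖ` is the correlation of `v`
at lag `k - 1`. Each `Cₖ` is at most `C₁ = ∑ vᵢ²` by AM-GM, and `C₀ = C₂` by symmetry. The only
coefficient that can be negative besides `ω₁` is `ω₂`, and `ω₀ + ω₂ = β(β-1)(β+2)/4 ≥ 0`; since
`ω₁` multiplies `C₁` itself, replacing every `Cₖ` by `C₁` can only increase the sum.
-/

open Finset

/-- Discrete inner product `(u,v) = h ∑_{i=1}^{N-1} u_i v_i`. -/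
noncomputable def ip (N : ℕ) (h : ℝ) (u v : ℕ → ℝ) : ℝ :=
  h * ∑ i ∈ Finset.Icc 1 (N - 1), u i * v i

/-- Discrete `L₂`-norm `‖v‖ = √(v,v)`. -/
noncomputable def gnorm (N : ℕ) (h : ℝ) (v : ℕ → ℝ) : ℝ :=
  Real.sqrt (ip N h v v)

/-- `(δ^γ_{x,+} v)_i = h^{-γ} ∑_{k=0}^{i+1} ω_k^{(γ)} v_{i-k+1}`. -/
noncomputable def dplus (γ : ℝ) (h : ℝ) (v : ℕ → ℝ) (i : ℕ) : ℝ :=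
  h ^ (-γ) * ∑ k ∈ Finset.range (i + 2), wcoef γ k * v (i + 1 - k)

/-- `(δ^γ_{x,-} v)_i = h^{-γ} ∑_{k=0}^{N-i+1} ω_k^{(γ)} v_{i+k-1}`. -/
noncomputable def dminus (γ : ℝ) (N : ℕ) (h : ℝ) (v : ℕ → ℝ) (i : ℕ) : ℝ :=
  h ^ (-γ) * ∑ k ∈ Finset.range (N - i + 2), wcoef γ k * v (i + k - 1)

theorem sum_ite_const_le {ι : Type*} (s : Finset ι) (p : ι → Prop) [DecidablePred p]
    (hp : ∀ i j, p i → p j → i = j) {a : ℝ} (ha : 0 ≤ a) :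
    ∑ i ∈ s, (if p i then a else 0) ≤ a := by
  rw [sum_ite, sum_const_zero, add_zero, sum_const, nsmul_eq_mul]
  have hcard : #(s.filter p) ≤ 1 :=
    card_le_one.2 fun i hi j hj => hp i j (mem_filter.1 hi).2 (mem_filter.1 hj).2
  exact mul_le_of_le_one_left ha (by exact_mod_cast hcard)

theorem sum_sum_ite_mul_le {ι : Type*} (s : Finset ι) (r : ι → ι → Prop) [DecidableRel r]
    (hr₁ : ∀ i j j', r i j → r i j' → j = j') (hr₂ : ∀ i i' j, r i j → r i' j → i = i')
    (x : ι → ℝ) :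
    ∑ i ∈ s, ∑ j ∈ s, (if r i j then x j * x i else 0) ≤ ∑ i ∈ s, x i * x i := by
  have hrow : ∑ i ∈ s, ∑ j ∈ s, (if r i j then x i * x i else 0) ≤ ∑ i ∈ s, x i * x i :=
    sum_le_sum fun i _ => sum_ite_const_le s (r i) (hr₁ i) (mul_self_nonneg _)
  have hcol : ∑ i ∈ s, ∑ j ∈ s, (if r i j then x j * x j else 0) ≤ ∑ j ∈ s, x j * x j := by
    rw [sum_comm]
    exact sum_le_sum fun j _ => sum_ite_const_le s (r · j) (hr₂ · · j) (mul_self_nonneg _)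
  have hamgm : ∑ i ∈ s, ∑ j ∈ s, (if r i j then x j * x i else 0) ≤
      ∑ i ∈ s, ∑ j ∈ s, ((if r i j then x j * x j else 0) + (if r i j then x i * x i else 0)) / 2 :=
    sum_le_sum fun i _ => sum_le_sum fun j _ => by
      split_ifs
      · nlinarith [sq_nonneg (x j - x i)]
      · simp
  simp only [← sum_div, sum_add_distrib] at hamgm
  linarith

section Grid

variable {N : ℕ} {v : ℕ → ℝ}

theorem sum_Icc_ite_add_eq (hv0 : v 0 = 0) (hvN : v N = 0) {a b : ℕ} (hab : b - a ≤ N) :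
    ∑ j ∈ Icc 1 (N - 1), (if j + a = b then v j else 0) = v (b - a) := by
  by_cases hba : a ≤ b
  · have hiff : ∀ j, j + a = b ↔ j = b - a := fun j => by omega
    simp only [hiff, sum_ite_eq', mem_Icc]
    split_ifs with hmem
    · rfl
    · obtain h | h : b - a = 0 ∨ b - a = N := by omega
      all_goals rw [h]; simp [hv0, hvN]
  · rw [sum_eq_zero fun j _ => if_neg (by omega), Nat.sub_eq_zero_of_le (by omega), hv0]

/-- The correlation `∑ vⱼ vᵢ` of `v` over interior grid points at lag `j - i = b - a`; the lag is
given by a pair to avoid truncated subtraction. -/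
noncomputable def shiftCorr (N : ℕ) (v : ℕ → ℝ) (a b : ℕ) : ℝ :=
  ∑ i ∈ Icc 1 (N - 1), ∑ j ∈ Icc 1 (N - 1), if j + a = i + b then v j * v i else 0

theorem shiftCorr_comm (a b : ℕ) : shiftCorr N v a b = shiftCorr N v b a := by
  unfold shiftCorr
  rw [sum_comm]
  refine sum_congr rfl fun i _ => sum_congr rfl fun j _ => ?_
  simp only [eq_comm (a := i + a), mul_comm]

theorem shiftCorr_add_add (a b c : ℕ) : shiftCorr N v (a + c) (b + c) = shiftCorr N v a b := by
  simp only [shiftCorr, ← add_assoc, add_left_inj]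

theorem shiftCorr_self (a : ℕ) : shiftCorr N v a a = ∑ i ∈ Icc 1 (N - 1), v i * v i := by
  refine sum_congr rfl fun i hi => ?_
  simp only [add_left_inj, sum_ite_eq', if_pos hi]

theorem shiftCorr_le (a b : ℕ) : shiftCorr N v a b ≤ ∑ i ∈ Icc 1 (N - 1), v i * v i :=
  sum_sum_ite_mul_le _ (fun i j => j + a = i + b) (fun _ _ _ _ _ => by omega)
    (fun _ _ _ _ _ => by omega) v

theorem shiftCorr_eq_zero_of_le {a b : ℕ} (hab : N + b ≤ a + 1) : shiftCorr N v a b = 0 :=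
  sum_eq_zero fun i hi => sum_eq_zero fun j hj => if_neg (by simp only [mem_Icc] at hi hj; omega)

end Grid

section Operators

variable {γ h : ℝ} {N : ℕ} {v : ℕ → ℝ}

theorem dplus_eq_sum_shift (hv0 : v 0 = 0) (hvN : v N = 0) {i : ℕ} (hi : i ∈ Icc 1 (N - 1)) :
    dplus γ h v i = h ^ (-γ) * ∑ k ∈ range (N + 1),
      wcoef γ k * ∑ j ∈ Icc 1 (N - 1), (if j + k = i + 1 then v j else 0) := by
  rw [mem_Icc] at hi
  rw [dplus]
  congr 1
  rw [← sum_subset (range_subset_range.2 (by omega : i + 2 ≤ N + 1))]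
  · exact sum_congr rfl fun k _ => by rw [sum_Icc_ite_add_eq hv0 hvN (by omega)]
  · intro k _ hk
    rw [sum_eq_zero fun j hj => if_neg (by simp only [mem_range, mem_Icc] at hk hj; omega),
      mul_zero]

theorem dminus_eq_sum_shift (hv0 : v 0 = 0) (hvN : v N = 0) {i : ℕ} (hi : i ∈ Icc 1 (N - 1)) :
    dminus γ N h v i = h ^ (-γ) * ∑ k ∈ range (N + 1),
      wcoef γ k * ∑ j ∈ Icc 1 (N - 1), (if j + 1 = i + k then v j else 0) := by
  rw [mem_Icc] at hi
  rw [dminus]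
  congr 1
  rw [← sum_subset (range_subset_range.2 (by omega : N - i + 2 ≤ N + 1))]
  · refine sum_congr rfl fun k hk => ?_
    rw [sum_Icc_ite_add_eq hv0 hvN (by simp only [mem_range] at hk; omega)]
  · intro k _ hk
    rw [sum_eq_zero fun j hj => if_neg (by simp only [mem_range, mem_Icc] at hk hj; omega),
      mul_zero]

theorem ip_dplus_eq (hv0 : v 0 = 0) (hvN : v N = 0) :
    ip N h (dplus γ h v) v =
      h * h ^ (-γ) * ∑ k ∈ range (N + 1), wcoef γ k * shiftCorr N v k 1 := by
  unfold ip shiftCorr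
  rw [sum_congr rfl fun i hi => by rw [dplus_eq_sum_shift hv0 hvN hi]]
  simp only [mul_sum, sum_mul, mul_assoc, ite_mul, zero_mul]
  rw [sum_comm]

theorem ip_dminus_eq (hv0 : v 0 = 0) (hvN : v N = 0) :
    ip N h (dminus γ N h v) v =
      h * h ^ (-γ) * ∑ k ∈ range (N + 1), wcoef γ k * shiftCorr N v 1 k := by
  unfold ip shiftCorr
  rw [sum_congr rfl fun i hi => by rw [dminus_eq_sum_shift hv0 hvN hi]]
  simp only [mul_sum, sum_mul, mul_assoc, ite_mul, zero_mul]
  rw [sum_comm]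

end Operators

section Coefficients

variable {γ : ℝ}

theorem gcoef_nonneg_s13 (hγ₁ : 1 ≤ γ) (hγ₂ : γ ≤ 2) {k : ℕ} (hk : 2 ≤ k) : 0 ≤ gcoef γ k := by
  induction k, hk using Nat.le_induction with
  | base =>
    simp only [gcoef]
    norm_num
    nlinarith
  | succ k hk ih =>
    have hk' : (2 : ℝ) ≤ k := by exact_mod_cast hk
    have hfactor : (γ + 1) / ((k : ℝ) + 1) ≤ 1 := by rw [div_le_one (by positivity)]; linarith
    rw [gcoef]
    exact mul_nonneg (by linarith) ih

theorem wcoef_zero_nonneg (hγ : 0 ≤ γ) : 0 ≤ wcoef γ 0 := by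
  simp only [wcoef, gcoef, mul_one]
  positivity

theorem wcoef_nonneg (hγ₁ : 1 ≤ γ) (hγ₂ : γ ≤ 2) {k : ℕ} (hk : 3 ≤ k) : 0 ≤ wcoef γ k := by
  obtain ⟨k, rfl⟩ : ∃ m, k = m + 1 := ⟨k - 1, by omega⟩
  rw [wcoef]
  have := gcoef_nonneg_s13 hγ₁ hγ₂ (k := k + 1) (by omega)
  have := gcoef_nonneg_s13 hγ₁ hγ₂ (k := k) (by omega)
  nlinarith

theorem wcoef_zero_add_wcoef_two_nonneg (hγ : 1 ≤ γ) : 0 ≤ wcoef γ 0 + wcoef γ 2 := by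
  have hclosed : wcoef γ 0 + wcoef γ 2 = γ * (γ - 1) * (γ + 2) / 4 := by
    simp only [wcoef, gcoef]
    norm_num
    ring
  rw [hclosed]
  have : 0 ≤ γ - 1 := by linarith
  positivity

end Coefficients

theorem sum_range_mul_le_sum_range_mul {w c : ℕ → ℝ} {q : ℝ} (hc : ∀ k, c k ≤ q) (hc₁ : c 1 = q)
    (hc₀₂ : c 0 = c 2) (hw₀ : 0 ≤ w 0) (hw₀₂ : 0 ≤ w 0 + w 2) (hw : ∀ k, 3 ≤ k → 0 ≤ w k)
    (n : ℕ) : ∑ k ∈ range n, w k * c k ≤ (∑ k ∈ range n, w k) * q := by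
  suffices 0 ≤ ∑ k ∈ range n, w k * (q - c k) by
    simpa only [mul_sub, sum_sub_distrib, sum_mul, sub_nonneg] using this
  have hhead : ∀ m ≤ 3, 0 ≤ ∑ k ∈ range m, w k * (q - c k) := by
    intro m hm
    have := mul_nonneg hw₀ (sub_nonneg.2 (hc 0))
    have := mul_nonneg hw₀₂ (sub_nonneg.2 (hc 0))
    interval_cases m <;> simp [sum_range_succ, hc₁, ← hc₀₂] <;> nlinarith
  rcases le_or_gt n 3 with hn | hn
  · exact hhead n hn
  · rw [← sum_range_add_sum_Ico _ hn.le]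
    refine add_nonneg (hhead 3 le_rfl) (sum_nonneg fun k hk => ?_)
    exact mul_nonneg (hw k (mem_Ico.1 hk).1) (sub_nonneg.2 (hc k))

theorem sq_gnorm {N : ℕ} {h : ℝ} (hh : 0 ≤ h) (v : ℕ → ℝ) :
    gnorm N h v ^ 2 = h * ∑ i ∈ Icc 1 (N - 1), v i * v i :=
  Real.sq_sqrt (mul_nonneg hh (sum_nonneg fun i _ => mul_self_nonneg (v i)))

theorem stmt13_general (β : ℝ) (hβ1 : 1 < β) (hβ2 : β < 2) (N : ℕ)
    (h : ℝ) (hh : 0 < h) (v : ℕ → ℝ) (hv0 : v 0 = 0) (hvN : v N = 0) :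
    ip N h (dplus β h v) v = ip N h (dminus β N h v) v ∧
    ip N h (dplus β h v) v ≤
      (h ^ (-β) * ∑ k ∈ Finset.range N, wcoef β k) * (gnorm N h v) ^ 2 := by
  have hplus := ip_dplus_eq (γ := β) (h := h) hv0 hvN
  refine ⟨by simp only [hplus, ip_dminus_eq hv0 hvN, shiftCorr_comm], ?_⟩
  have hcorr₀₂ : shiftCorr N v 0 1 = shiftCorr N v 2 1 := by
    rw [shiftCorr_comm 2, ← shiftCorr_add_add 0 1 1]
  have hcorr : ∑ k ∈ range N, wcoef β k * shiftCorr N v k 1 ≤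
      (∑ k ∈ range N, wcoef β k) * ∑ i ∈ Icc 1 (N - 1), v i * v i :=
    sum_range_mul_le_sum_range_mul (w := wcoef β) (c := (shiftCorr N v · 1))
      (fun k => shiftCorr_le k 1) (shiftCorr_self 1) hcorr₀₂
      (wcoef_zero_nonneg (by linarith)) (wcoef_zero_add_wcoef_two_nonneg hβ1.le)
      (fun k hk => wcoef_nonneg hβ1.le hβ2.le hk) N
  have hscale : 0 ≤ h * h ^ (-β) := mul_nonneg hh.le (Real.rpow_nonneg hh.le _)
  rw [hplus, sum_range_succ, shiftCorr_eq_zero_of_le le_rfl, mul_zero, add_zero, sq_gnorm hh.le]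
  calc h * h ^ (-β) * ∑ k ∈ range N, wcoef β k * shiftCorr N v k 1
      ≤ h * h ^ (-β) * ((∑ k ∈ range N, wcoef β k) * ∑ i ∈ Icc 1 (N - 1), v i * v i) :=
        mul_le_mul_of_nonneg_left hcorr hscale
    _ = _ := by ring

theorem stmt13 (β : ℝ) (hβ1 : 1 < β) (hβ2 : β < 2) (N : ℕ) (hN : 2 ≤ N)
    (h : ℝ) (hh : 0 < h) (v : ℕ → ℝ) (hv0 : v 0 = 0) (hvN : v N = 0) :
    ip N h (dplus β h v) v = ip N h (dminus β N h v) v ∧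
    ip N h (dplus β h v) v ≤
      (h ^ (-β) * ∑ k ∈ Finset.range N, wcoef β k) * (gnorm N h v) ^ 2 :=
  stmt13_general β hβ1 hβ2 N h hh v hv0 hvN
end
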